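/- For 0 < α ≤ 1, β > 0, and real c with |c| < s^α (s > 0), the Laplace transform of t ↦ t^{β-1} E_{α,β}(c t^α) evaluated at s equals s^{-β} (1 - c s^{-α})^{-1}. -/

import Mathlib

/-!
Expand the Mittag-Leffler function into its power series. The `k`-th term of the integrand is
`c ^ k` times the normalised Gamma kernel `t ^ (p - 1) e ^ (-s t) / Γ(p)` with `p = kα + β`,
whose Laplace integral is `s ^ (-p)`. The kernels are nonnegative, so the integrals of the norms
of the terms form the geometric series with ratio `|c| s ^ (-α) < 1`; this justifies integrating
term by term, and the resulting geometric series `∑ (c s ^ (-α)) ^ k s ^ (-β)` sums to the claim.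
-/

open MeasureTheory

/-- Two-parameter Mittag-Leffler function (real argument). -/
noncomputable def mittagLeffler2 (α β : ℝ) (z : ℝ) : ℝ :=
  ∑' k : ℕ, z ^ k / Real.Gamma (k * α + β)

open Real Set

section GammaKernel

variable {p s : ℝ}

lemma integrableOn_rpow_sub_one_mul_exp_neg_mul (hp : 0 < p) (hs : 0 < s) :
    IntegrableOn (fun t : ℝ => t ^ (p - 1) * exp (-(s * t))) (Ioi 0) := by
  refine (integrableOn_rpow_mul_exp_neg_mul_rpow (s := p - 1) (by linarith) one_pos hs).congr_fun
    (fun t _ => ?_) measurableSet_Ioi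
  simp only [rpow_one, neg_mul]

lemma integral_rpow_sub_one_mul_exp_neg_mul_div_Gamma (hp : 0 < p) (hs : 0 < s) :
    ∫ t in Ioi 0, t ^ (p - 1) * exp (-(s * t)) / Gamma p = s ^ (-p) := by
  rw [integral_div, integral_rpow_mul_exp_neg_mul_Ioi hp hs, mul_div_cancel_right₀ _
    (Gamma_pos_of_pos hp).ne', one_div, inv_rpow hs.le, rpow_neg hs.le]

end GammaKernel

lemma rpow_neg_natCast_mul_add {s : ℝ} (hs : 0 < s) (k : ℕ) (α β : ℝ) :
    s ^ (-(k * α + β)) = (s ^ (-α)) ^ k * s ^ (-β) := by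
  rw [← rpow_natCast, ← rpow_mul hs.le, ← rpow_add hs]
  ring_nf

lemma exp_neg_mul_mul_rpow_mul_mittagLeffler2 {α β c s t : ℝ} (ht : 0 < t) :
    exp (-s * t) * (t ^ (β - 1) * mittagLeffler2 α β (c * t ^ α))
      = ∑' k : ℕ, c ^ k * (t ^ (k * α + β - 1) * exp (-(s * t)) / Gamma (k * α + β)) := by
  rw [mittagLeffler2, ← tsum_mul_left, ← tsum_mul_left]
  refine tsum_congr fun k => ?_
  have hpow : t ^ (k * α + β - 1) = t ^ (β - 1) * (t ^ α) ^ k := by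
    rw [← rpow_natCast, ← rpow_mul ht.le, ← rpow_add ht]
    ring_nf
  rw [hpow, mul_pow, neg_mul]
  ring

lemma integral_tsum_pow_mul_rpow_mul_exp_neg_mul_div_Gamma {α β c s : ℝ} (hα : 0 ≤ α)
    (hβ : 0 < β) (hs : 0 < s) (hc : |c| * s ^ (-α) < 1) :
    ∫ t in Ioi 0, ∑' k : ℕ, c ^ k * (t ^ (k * α + β - 1) * exp (-(s * t)) / Gamma (k * α + β))
      = s ^ (-β) * (1 - c * s ^ (-α))⁻¹ := by
  have hp (k : ℕ) : 0 < k * α + β := by positivity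
  have hint (k : ℕ) : IntegrableOn
      (fun t => c ^ k * (t ^ (k * α + β - 1) * exp (-(s * t)) / Gamma (k * α + β))) (Ioi 0) :=
    ((integrableOn_rpow_sub_one_mul_exp_neg_mul (hp k) hs).div_const _).const_mul _
  have hterm (a : ℝ) (k : ℕ) :
      ∫ t in Ioi 0, a ^ k * (t ^ (k * α + β - 1) * exp (-(s * t)) / Gamma (k * α + β))
        = (a * s ^ (-α)) ^ k * s ^ (-β) := by
    rw [integral_const_mul, integral_rpow_sub_one_mul_exp_neg_mul_div_Gamma (hp k) hs,
      rpow_neg_natCast_mul_add hs, mul_pow, mul_assoc]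
  have hnorm (k : ℕ) :
      ∫ t in Ioi 0, ‖c ^ k * (t ^ (k * α + β - 1) * exp (-(s * t)) / Gamma (k * α + β))‖
        = (|c| * s ^ (-α)) ^ k * s ^ (-β) := by
    rw [← hterm]
    refine setIntegral_congr_fun measurableSet_Ioi fun t (ht : 0 < t) => ?_
    have : 0 ≤ t ^ (k * α + β - 1) * exp (-(s * t)) / Gamma (k * α + β) := by positivity
    rw [norm_mul, norm_pow, Real.norm_eq_abs, Real.norm_of_nonneg this]
  have hsum : Summable fun k : ℕ => (|c| * s ^ (-α)) ^ k * s ^ (-β) :=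
    (summable_geometric_of_lt_one (by positivity) hc).mul_right _
  have hratio : |c * s ^ (-α)| < 1 := by rwa [abs_mul, abs_of_pos (rpow_pos_of_pos hs _)]
  rw [← integral_tsum_of_summable_integral_norm hint (by simpa only [hnorm] using hsum)]
  simp only [hterm]
  rw [tsum_mul_right, tsum_geometric_of_abs_lt_one hratio, mul_comm]

lemma abs_mul_rpow_neg_lt_one {α c s : ℝ} (hs : 0 < s) (hc : |c| < s ^ α) :
    |c| * s ^ (-α) < 1 := by
  rwa [rpow_neg hs.le, mul_inv_lt_iff₀ (rpow_pos_of_pos hs α), one_mul]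

theorem laplace_transform_mittagLeffler_general (α β c s : ℝ) (hα0 : 0 < α)
    (hβ : 0 < β) (hs : 0 < s) (hc : |c| < s ^ α) :
    (∫ t in Set.Ioi (0 : ℝ),
        Real.exp (-s * t) * (t ^ (β - 1) * mittagLeffler2 α β (c * t ^ α)))
      = s ^ (-β) * (1 - c * s ^ (-α))⁻¹ := by
  rw [setIntegral_congr_fun measurableSet_Ioi
    fun t ht => exp_neg_mul_mul_rpow_mul_mittagLeffler2 (c := c) (s := s) ht]
  exact integral_tsum_pow_mul_rpow_mul_exp_neg_mul_div_Gamma hα0.le hβ hs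
    (abs_mul_rpow_neg_lt_one hs hc)

/-- Laplace transform of `t ↦ t^(β-1) E_{α,β}(c t^α)`:
for `0 < α ≤ 1`, `β > 0`, `s > 0` with `|c| < s^α`,
`∫₀^∞ e^(-s t) t^(β-1) E_{α,β}(c t^α) dt = s^(-β) (1 - c s^(-α))⁻¹`. -/
theorem laplace_transform_mittagLeffler (α β c s : ℝ) (hα0 : 0 < α) (hα1 : α ≤ 1)
    (hβ : 0 < β) (hs : 0 < s) (hc : |c| < s ^ α) :
    (∫ t in Set.Ioi (0 : ℝ),
        Real.exp (-s * t) * (t ^ (β - 1) * mittagLeffler2 α β (c * t ^ α)))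
      = s ^ (-β) * (1 - c * s ^ (-α))⁻¹ :=
  laplace_transform_mittagLeffler_general α β c s hα0 hβ hs hc
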